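/- Given a homeomorphism φ of the Cantor space normalizing V, there exists a unique map γ_φ : Q₂ → ℤ with γ_φ(v·0) = log₂((φ^{-1}vφ)'(φ^{-1}0)) − k_φ·log₂(v'(0)) for all v ∈ V, and this map satisfies γ_φ(vx) − γ_φ(x) = log₂((φ^{-1}vφ)'(φ^{-1}x)) − k_φ·log₂(v'(x)) for all v ∈ V and x ∈ Q₂. -/

import Mathlib

/-! Basic setup: the Cantor space, prefix replacement, Thompson's group `V`,
slopes, dyadic rationals, standard dyadic partitions, locally constant maps,
and the permutation model of the twisted fraction groups `LΓ ⋊ V`. -/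

abbrev Cantor : Type := ℕ → Bool

/-- Concatenation of a finite word with an infinite sequence. -/
def cat (w : List Bool) (x : Cantor) : Cantor :=
  fun n => if n < w.length then w.getD n false else x (n - w.length)

/-- The standard dyadic interval (cylinder) associated to a finite word. -/
def cyl (w : List Bool) : Set Cantor := {x | ∃ y : Cantor, x = cat w y}

/-- Membership in Thompson's group `V`: a homeomorphism of the Cantor space which is
everywhere locally given by prefix replacement. -/
def memV (v : Cantor ≃ₜ Cantor) : Prop :=
  ∀ x : Cantor, ∃ (m w : List Bool) (y : Cantor),
    x = cat m y ∧ ∀ z : Cantor, v (cat m z) = cat w z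

/-- `HasLogSlope v x k` : `k = log₂ v'(x)`, base-2 logarithm of the slope of `v` at `x`. -/
def HasLogSlope (v : Cantor ≃ₜ Cantor) (x : Cantor) (k : ℤ) : Prop :=
  ∃ (m w : List Bool) (y : Cantor),
    x = cat m y ∧ (∀ z : Cantor, v (cat m z) = cat w z) ∧
      k = (m.length : ℤ) - (w.length : ℤ)

open Classical in
noncomputable def logSlope (v : Cantor ≃ₜ Cantor) (x : Cantor) : ℤ :=
  if h : ∃ k : ℤ, HasLogSlope v x k then h.choose else 0

/-- The eventually periodic sequence `c∞ = c·c·c⋯`. -/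
def tailSeq (c : List Bool) : Cantor := fun n => c.getD (n % c.length) false

/-- `x` lies in the tail equivalence class of the word `c`, i.e. `x = y·c∞`. -/
def InTailClass (x : Cantor) (c : List Bool) : Prop :=
  ∃ y : List Bool, x = cat y (tailSeq c)

/-- `x` is eventually periodic (a rational point of the Cantor space). -/
def EvPeriodic (x : Cantor) : Prop :=
  ∃ (y c : List Bool), c ≠ [] ∧ x = cat y (tailSeq c)

/-- A prime word: a nonempty word which is not a proper power of a word. -/
def PrimeWord (c : List Bool) : Prop :=
  c ≠ [] ∧ ∀ (d : List Bool) (k : ℕ), 2 ≤ k → c ≠ (List.replicate k d).flatten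

/-- `conjH φ v = φ ∘ v ∘ φ⁻¹`. -/
def conjH (φ v : Cantor ≃ₜ Cantor) : Cantor ≃ₜ Cantor := φ.symm.trans (v.trans φ)

/-- `φ` normalizes Thompson's group `V` inside `Homeo(𝔠)` : `φ V φ⁻¹ = V`. -/
def NormalizesV (φ : Cantor ≃ₜ Cantor) : Prop :=
  (conjH φ) '' {v | memV v} = {v | memV v}

/-- The copy of the dyadic rationals `Q₂ ⊂ 𝔠` : finitely supported sequences. -/
def InQ2 (x : Cantor) : Prop := ∃ n : ℕ, ∀ m, n ≤ m → x m = false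

def zeroSeq : Cantor := fun _ => false

/-- A standard dyadic partition of the Cantor space. -/
def IsSDP (P : Finset (List Bool)) : Prop :=
  ∀ x : Cantor, ∃! w : List Bool, w ∈ P ∧ x ∈ cyl w

/-- Locally constant map: constant on each piece of some standard dyadic partition. -/
def IsLC {Γ : Type*} (f : Cantor → Γ) : Prop :=
  ∃ P : Finset (List Bool), IsSDP P ∧ ∀ w ∈ P, ∀ y z : Cantor, f (cat w y) = f (cat w z)

/-- `h` agrees on `Q₂` with (the restriction of) a locally constant map. -/
def AgreesOnQ2WithLC {Γ : Type*} (h : Cantor → Γ) : Prop :=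
  ∃ b : Cantor → Γ, IsLC b ∧ ∀ x, InQ2 x → h x = b x

section GroupPart
variable {Γ : Type*} [Group Γ]

/-- `alphaWord α₀ α₁ (m₁⋯m_k) = α_{m_k} ∘ ⋯ ∘ α_{m₁}`. -/
def alphaWord (α₀ α₁ : Γ ≃* Γ) (m : List Bool) : Γ ≃* Γ :=
  m.foldl (fun acc b => acc.trans (if b then α₁ else α₀)) (MulEquiv.refl Γ)

open Classical in
/-- The twisting automorphism `τ_{v,x} = α_{v(I)}⁻¹ ∘ α_I` for a standard dyadic
interval `I` containing `x` and adapted to `v`. -/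
noncomputable def tauEquiv (α₀ α₁ : Γ ≃* Γ) (v : Cantor ≃ₜ Cantor) (x : Cantor) : Γ ≃* Γ :=
  if h : ∃ p : List Bool × List Bool, x ∈ cyl p.1 ∧ ∀ z : Cantor, v (cat p.1 z) = cat p.2 z
  then (alphaWord α₀ α₁ h.choose.1).trans (alphaWord α₀ α₁ h.choose.2).symm
  else MulEquiv.refl Γ

/-- The element `a·v` of the twisted `LΓ ⋊ V`, realized as the permutation
`(x,g) ↦ (v x, a(v x) · τ_{v,x}(g))` of `𝔠 × Γ`. -/
noncomputable def permOf (α₀ α₁ : Γ ≃* Γ) (a : Cantor → Γ) (v : Cantor ≃ₜ Cantor) :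
    Equiv.Perm (Cantor × Γ) where
  toFun p := (v p.1, a (v p.1) * tauEquiv α₀ α₁ v p.1 p.2)
  invFun p := (v.symm p.1, (tauEquiv α₀ α₁ v (v.symm p.1)).symm ((a p.1)⁻¹ * p.2))
  left_inv := by rintro ⟨x, g⟩; simp
  right_inv := by rintro ⟨x, g⟩; simp

end GroupPart

/-- The twisted fraction group `G = LΓ ⋊ V` of the triple `(Γ, α₀, α₁)`,
as a group of permutations of `𝔠 × Γ`. -/
noncomputable def Gsub (Γ : Type*) [Group Γ] (α₀ α₁ : Γ ≃* Γ) :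
    Subgroup (Equiv.Perm (Cantor × Γ)) :=
  Subgroup.closure {p | ∃ a v, IsLC a ∧ memV v ∧ p = permOf α₀ α₁ a v}

/-- The untwisted case `α₀ = α₁ = id`. -/
noncomputable def permOfU {Γ : Type*} [Group Γ] (a : Cantor → Γ) (v : Cantor ≃ₜ Cantor) :=
  permOf (MulEquiv.refl Γ) (MulEquiv.refl Γ) a v

/-- The untwisted fraction group `G = LΓ ⋊ V`. -/
noncomputable def GsubU (Γ : Type*) [Group Γ] := Gsub Γ (MulEquiv.refl Γ) (MulEquiv.refl Γ)

/-- `f ∈ N_{K̄}(G)` : the element `f` of `K̄ = ∏_{Q₂}Γ` normalizes `G = LΓ ⋊ V`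
(untwisted case), i.e. `f·a·(f^v)⁻¹` and `f⁻¹·a·f^v` are locally constant on `Q₂`. -/
def InNormKbar {Γ : Type*} [Group Γ] (f : Cantor → Γ) : Prop :=
  ∀ (a : Cantor → Γ) (v : Cantor ≃ₜ Cantor), IsLC a → memV v →
    AgreesOnQ2WithLC (fun x => f x * a x * (f (v.symm x))⁻¹) ∧
    AgreesOnQ2WithLC (fun x => (f x)⁻¹ * a x * f (v.symm x))

/-! Everything rests on the slope identity `log₂((φ⁻¹uφ)'(φ⁻¹0)) = |c| · log₂(u'(0))` for the
elements `u ∈ V` fixing `0`. Granted it, `δ(v, x) = log₂((φ⁻¹vφ)'(φ⁻¹x)) - |c| · log₂(v'(x))` is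
a cocycle vanishing on the stabiliser of `0`, so `γ(v0) := δ(v, 0)` is well defined on the orbit
`Q₂` of `0`, and the cocycle identity for `δ` is the one claimed for `γ`.

For the slope identity: conjugation `u ↦ φ⁻¹uφ` carries the stabiliser of `0` onto that of
`p = φ⁻¹0 = y·c∞`, and preserves slope-`0` germs, which are locally the identity; hence the two
slope homomorphisms are proportional. Since `c` is primitive, every element of `V` fixing `p` has
slope divisible by `|c|`, and the contraction `y·z ↦ y·c·z` has slope `-|c|`; together with an
element of slope `-1` at `0`, this forces the factor to be `±|c|`. Contracting a neighbourhood
onto the fixed point is a topological property, so the conjugate of the contraction contracts at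
`0`, has negative slope there, and the sign is `+`. -/

open Function Filter Topology

section Words

def shift (k : ℕ) (x : Cantor) : Cantor := fun n => x (n + k)

def initSeg (x : Cantor) (k : ℕ) : List Bool := List.ofFn fun i : Fin k => x i

variable {u v w : List Bool} {x y : Cantor}

lemma cat_apply_of_lt {i : ℕ} (h : i < w.length) : cat w x i = w.getD i false := if_pos h

lemma cat_apply_of_le {i : ℕ} (h : w.length ≤ i) : cat w x i = x (i - w.length) :=
  if_neg (Nat.not_lt.2 h)

lemma cat_nil (x : Cantor) : cat [] x = x := by
  funext i; simp [cat]

lemma cat_append (u v : List Bool) (x : Cantor) : cat (u ++ v) x = cat u (cat v x) := by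
  funext i
  rcases lt_or_ge i u.length with h | h
  · rw [cat_apply_of_lt (by rw [List.length_append]; omega), cat_apply_of_lt h,
      List.getD_append _ _ _ _ h]
  rw [cat_apply_of_le h]
  rcases lt_or_ge i (u ++ v).length with h' | h'
  · rw [cat_apply_of_lt h', cat_apply_of_lt (by rw [List.length_append] at h'; omega),
      List.getD_append_right _ _ _ _ h]
  · rw [List.length_append] at h'
    rw [cat_apply_of_le (by rw [List.length_append]; omega), cat_apply_of_le (by omega),
      List.length_append, Nat.sub_add_eq]

lemma shift_cat (w : List Bool) (x : Cantor) : shift w.length (cat w x) = x := by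
  funext n; simp [shift, cat]

lemma shift_shift (a b : ℕ) (x : Cantor) : shift a (shift b x) = shift (a + b) x := by
  funext n; simp [shift, Nat.add_assoc]

lemma cat_right_injective (w : List Bool) : Injective (cat w) := fun x y h => by
  rw [← shift_cat w x, h, shift_cat]

lemma cat_shift_of_mem_cyl (h : x ∈ cyl w) : cat w (shift w.length x) = x := by
  obtain ⟨y, rfl⟩ := h
  rw [shift_cat]

lemma mem_cyl_iff : x ∈ cyl w ↔ ∀ i < w.length, x i = w.getD i false := by
  refine ⟨fun ⟨y, hy⟩ i hi => hy ▸ cat_apply_of_lt hi, fun h => ⟨shift w.length x, ?_⟩⟩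
  funext i
  rcases lt_or_ge i w.length with hi | hi
  · rw [cat_apply_of_lt hi, h i hi]
  · simp [cat_apply_of_le hi, shift, Nat.sub_add_cancel hi]

lemma initSeg_length (x : Cantor) (k : ℕ) : (initSeg x k).length = k := by simp [initSeg]

lemma initSeg_getD {k i : ℕ} (h : i < k) : (initSeg x k).getD i false = x i := by
  simp [initSeg, h]

lemma cyl_initSeg (x : Cantor) (k : ℕ) : cyl (initSeg x k) = PiNat.cylinder x k := by
  ext y
  simp only [mem_cyl_iff, PiNat.mem_cylinder_iff, initSeg_length]
  exact forall₂_congr fun i hi => by rw [initSeg_getD hi]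

lemma cat_initSeg_shift (x : Cantor) (k : ℕ) : cat (initSeg x k) (shift k x) = x := by
  simpa [initSeg_length] using cat_shift_of_mem_cyl (w := initSeg x k)
    (by rw [cyl_initSeg]; exact PiNat.self_mem_cylinder x k)

lemma eq_of_cat_eq_cat (hl : u.length = v.length) (h : cat u x = cat v y) : u = v := by
  refine List.ext_getElem hl fun i hu hv => ?_
  have := congrFun h i
  rwa [cat_apply_of_lt hu, cat_apply_of_lt hv, List.getD_eq_getElem _ _ hu,
    List.getD_eq_getElem _ _ hv] at this

lemma eq_of_forall_cat_eq (h : ∀ z, cat u z = cat v z) : u = v := by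
  refine eq_of_cat_eq_cat ?_ (h zeroSeq)
  by_contra hne
  wlog hlt : u.length < v.length generalizing u v
  · exact this (fun z => (h z).symm) (Ne.symm hne) (by omega)
  have := congrFun (h fun _ => !v.getD u.length false) u.length
  rw [cat_apply_of_le le_rfl, cat_apply_of_lt hlt] at this
  simp at this

lemma exists_eq_append_of_cat_eq_cat (h : cat u x = cat v y) (hl : u.length ≤ v.length) :
    ∃ s, v = u ++ s ∧ x = cat s y := by
  rw [← List.take_append_drop u.length v, cat_append] at h
  have hu : u = v.take u.length := eq_of_cat_eq_cat (by rw [List.length_take]; omega) h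
  rw [← hu] at h
  refine ⟨v.drop u.length, ?_, cat_right_injective _ h⟩
  conv_lhs => rw [← List.take_append_drop u.length v, ← hu]

end Words

section CylinderTopology

lemma cyl_eq_cylinder (w : List Bool) (x : Cantor) :
    cyl w = PiNat.cylinder (cat w x) w.length := by
  ext y
  simp +contextual [mem_cyl_iff, PiNat.mem_cylinder_iff, cat_apply_of_lt]

lemma isOpen_cyl (w : List Bool) : IsOpen (cyl w) :=
  cyl_eq_cylinder w zeroSeq ▸ PiNat.isOpen_cylinder _ _ _

lemma exists_cylinder_subset {x : Cantor} {O : Set Cantor} (h : O ∈ 𝓝 x) :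
    ∃ N, PiNat.cylinder x N ⊆ O := by
  obtain ⟨_, ⟨y, N, rfl⟩, hx, hO⟩ := (PiNat.isTopologicalBasis_cylinders _).mem_nhds_iff.1 h
  exact ⟨N, PiNat.mem_cylinder_iff_eq.1 hx ▸ hO⟩

lemma continuous_cat (w : List Bool) : Continuous (cat w) :=
  continuous_pi fun i => by
    by_cases h : i < w.length
    · simpa [cat, h] using continuous_const
    · simpa [cat, h] using continuous_apply (i - w.length)

lemma continuous_of_forall_exists_cat {f : Cantor → Cantor}
    (h : ∀ x, ∃ (m w : List Bool) (y : Cantor), x = cat m y ∧ ∀ z, f (cat m z) = cat w z) :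
    Continuous f := by
  refine continuous_iff_continuousAt.2 fun x => ?_
  obtain ⟨m, w, y, rfl, hf⟩ := h x
  have hcont : Continuous fun z => cat w (shift m.length z) :=
    (continuous_cat w).comp (continuous_pi fun n => continuous_apply _)
  refine hcont.continuousAt.congr (eventuallyEq_of_mem ((isOpen_cyl m).mem_nhds ⟨y, rfl⟩) ?_)
  rintro _ ⟨z, rfl⟩
  simp [shift_cat, hf]

end CylinderTopology

section Slopes

variable {u v : Cantor ≃ₜ Cantor} {x : Cantor} {k k' : ℤ}

lemma HasLogSlope.unique (h : HasLogSlope v x k) (h' : HasLogSlope v x k') : k = k' := by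
  obtain ⟨m, w, y, hx, hm, rfl⟩ := h
  obtain ⟨m', w', y', hx', hm', rfl⟩ := h'
  wlog hl : m.length ≤ m'.length generalizing m w y m' w' y'
  · exact (this m' w' y' hx' hm' m w y hx hm (by omega)).symm
  obtain ⟨s, rfl, -⟩ := exists_eq_append_of_cat_eq_cat (hx.symm.trans hx') hl
  obtain rfl : w' = w ++ s := eq_of_forall_cat_eq fun z => by rw [← hm', cat_append, hm, cat_append]
  simp only [List.length_append, Nat.cast_add]
  ring

lemma HasLogSlope.logSlope_eq (h : HasLogSlope v x k) : logSlope v x = k := by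
  have hex : ∃ k, HasLogSlope v x k := ⟨k, h⟩
  rw [logSlope, dif_pos hex]
  exact hex.choose_spec.unique h

lemma memV_iff_forall_exists_hasLogSlope : memV v ↔ ∀ x, ∃ k, HasLogSlope v x k :=
  ⟨fun h x => let ⟨m, w, y, hx, hm⟩ := h x; ⟨_, m, w, y, hx, hm, rfl⟩,
    fun h x => let ⟨_, m, w, y, hx, hm, _⟩ := h x; ⟨m, w, y, hx, hm⟩⟩

lemma hasLogSlope_logSlope (hv : memV v) (x : Cantor) : HasLogSlope v x (logSlope v x) := by
  obtain ⟨k, hk⟩ := memV_iff_forall_exists_hasLogSlope.1 hv x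
  rwa [hk.logSlope_eq]

lemma hasLogSlope_one (x : Cantor) : HasLogSlope 1 x 0 :=
  ⟨[], [], x, (cat_nil x).symm, fun z => by simp [cat_nil], by simp⟩

lemma HasLogSlope.mul (hv : HasLogSlope v x k) (hu : HasLogSlope u (v x) k') :
    HasLogSlope (u * v) x (k + k') := by
  obtain ⟨m, w, y, rfl, hm, rfl⟩ := hv
  obtain ⟨m', w', y', hx', hm', rfl⟩ := hu
  rw [hm] at hx'
  rcases le_total w.length m'.length with hl | hl
  · obtain ⟨s, rfl, rfl⟩ := exists_eq_append_of_cat_eq_cat hx' hl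
    refine ⟨m ++ s, w', y', (cat_append _ _ _).symm, fun z => ?_, ?_⟩
    · rw [Homeomorph.mul_apply, cat_append, hm, ← cat_append, hm']
    · simp only [List.length_append, Nat.cast_add]; ring
  · obtain ⟨s, rfl, rfl⟩ := exists_eq_append_of_cat_eq_cat hx'.symm hl
    refine ⟨m, w' ++ s, y, rfl, fun z => ?_, ?_⟩
    · rw [Homeomorph.mul_apply, hm, cat_append, hm', cat_append]
    · simp only [List.length_append, Nat.cast_add]; ring

lemma HasLogSlope.inv (h : HasLogSlope v x k) : HasLogSlope v⁻¹ (v x) (-k) := by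
  obtain ⟨m, w, y, rfl, hm, rfl⟩ := h
  exact ⟨w, m, y, hm y, fun z => by rw [Homeomorph.inv_apply, ← hm, v.symm_apply_apply], by ring⟩

def thompsonV : Subgroup (Cantor ≃ₜ Cantor) where
  carrier := {v | memV v}
  one_mem' := memV_iff_forall_exists_hasLogSlope.2 fun x => ⟨0, hasLogSlope_one x⟩
  mul_mem' {u v} hu hv := memV_iff_forall_exists_hasLogSlope.2 fun x =>
    ⟨_, (hasLogSlope_logSlope hv x).mul (hasLogSlope_logSlope hu (v x))⟩
  inv_mem' {v} hv := memV_iff_forall_exists_hasLogSlope.2 fun x =>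
    ⟨_, by simpa using (hasLogSlope_logSlope hv (v⁻¹ x)).inv⟩

lemma logSlope_mul (hu : memV u) (hv : memV v) (x : Cantor) :
    logSlope (u * v) x = logSlope v x + logSlope u (v x) :=
  ((hasLogSlope_logSlope hv x).mul (hasLogSlope_logSlope hu (v x))).logSlope_eq

lemma zpow_apply_eq_self (hx : u x = x) (n : ℤ) : (u ^ n) x = x := by
  induction n using Int.induction_on with
  | zero => rfl
  | succ n ih => rw [zpow_add_one, Homeomorph.mul_apply, hx, ih]
  | pred n ih => rw [zpow_sub_one, Homeomorph.mul_apply, Homeomorph.inv_apply,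
      u.symm_apply_eq.2 hx.symm, ih]

lemma logSlope_zpow_of_apply_eq (hu : memV u) (hx : u x = x) (n : ℤ) :
    logSlope (u ^ n) x = n * logSlope u x := by
  induction n using Int.induction_on with
  | zero => simpa using (hasLogSlope_one x).logSlope_eq
  | succ n ih =>
    rw [zpow_add_one, logSlope_mul (thompsonV.zpow_mem hu n) hu, hx, ih]
    ring
  | pred n ih =>
    have hinv : logSlope u⁻¹ x = -logSlope u x := by
      simpa [hx] using (hasLogSlope_logSlope hu x).inv.logSlope_eq
    rw [zpow_sub_one, logSlope_mul (thompsonV.zpow_mem hu (-n)) (thompsonV.inv_mem hu), hinv,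
      Homeomorph.inv_apply, u.symm_apply_eq.2 hx.symm, ih]
    ring

end Slopes

section Conjugation

variable {ψ u u' w : Cantor ≃ₜ Cantor} {x : Cantor}

lemma conjH_eq_conj (ψ : Cantor ≃ₜ Cantor) : conjH ψ = MulAut.conj ψ := rfl

lemma conjH_apply (ψ v : Cantor ≃ₜ Cantor) (x : Cantor) : conjH ψ v x = ψ (v (ψ.symm x)) := rfl

lemma conjH_apply_apply_of_apply_eq (h : u x = x) : conjH ψ u (ψ x) = ψ x := by
  simp [conjH_apply, h]

lemma conjH_symm_conjH (ψ v : Cantor ≃ₜ Cantor) : conjH ψ.symm (conjH ψ v) = v := by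
  ext; simp [conjH_apply]

lemma NormalizesV.memV_conjH {φ v : Cantor ≃ₜ Cantor} (hφ : NormalizesV φ) (hv : memV v) :
    memV (conjH φ v) := by
  have h : conjH φ v ∈ conjH φ '' {v | memV v} := Set.mem_image_of_mem _ hv
  rwa [hφ] at h

lemma NormalizesV.memV_conjH_symm {φ v : Cantor ≃ₜ Cantor} (hφ : NormalizesV φ) (hv : memV v) :
    memV (conjH φ.symm v) := by
  obtain ⟨u, hu, rfl⟩ : v ∈ conjH φ '' {v | memV v} := by rwa [hφ]
  rwa [conjH_symm_conjH]

lemma eventually_apply_eq_self_of_logSlope_eq_zero (hw : memV w) (hx : w x = x)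
    (h : logSlope w x = 0) : ∀ᶠ y in 𝓝 x, w y = y := by
  obtain ⟨m, m', y, hxm, hm, hk⟩ := hasLogSlope_logSlope hw x
  obtain rfl : m = m' := eq_of_cat_eq_cat (by omega) (hxm.symm.trans (hx.symm.trans (hxm ▸ hm y)))
  filter_upwards [(isOpen_cyl m).mem_nhds ⟨y, hxm⟩]
  rintro _ ⟨z, rfl⟩
  exact hm z

lemma hasLogSlope_zero_of_eventually_apply_eq_self (h : ∀ᶠ y in 𝓝 x, w y = y) :
    HasLogSlope w x 0 := by
  obtain ⟨N, hN⟩ := exists_cylinder_subset h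
  refine ⟨initSeg x N, initSeg x N, shift N x, (cat_initSeg_shift x N).symm, fun z => ?_, by simp⟩
  exact hN (cyl_initSeg x N ▸ ⟨z, rfl⟩)

/-- A germ of slope `0` at a fixed point is the identity, and stays so under conjugation. -/
lemma logSlope_conjH_eq_zero (ψ : Cantor ≃ₜ Cantor) (hw : memV w) (hx : w x = x)
    (h : logSlope w x = 0) : logSlope (conjH ψ w) (ψ x) = 0 := by
  have hψ : Tendsto ψ.symm (𝓝 (ψ x)) (𝓝 x) := ψ.symm.continuous.tendsto' _ _ (by simp)
  refine (hasLogSlope_zero_of_eventually_apply_eq_self ?_).logSlope_eq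
  filter_upwards [hψ.eventually (eventually_apply_eq_self_of_logSlope_eq_zero hw hx h)] with y hy
  simp [conjH_apply, hy]

/-- `u ^ logSlope u' x * u' ^ (-logSlope u x)` fixes `x` with slope `0`, hence so does its
conjugate. -/
lemma logSlope_conjH_mul_logSlope_comm (hψ : ∀ v, memV v → memV (conjH ψ v))
    (hu : memV u) (hu' : memV u') (hux : u x = x) (hu'x : u' x = x) :
    logSlope (conjH ψ u) (ψ x) * logSlope u' x = logSlope (conjH ψ u') (ψ x) * logSlope u x := by
  set a := logSlope u x
  set a' := logSlope u' x
  have hv : memV (u ^ a' * u' ^ (-a)) :=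
    thompsonV.mul_mem (thompsonV.zpow_mem hu _) (thompsonV.zpow_mem hu' _)
  have hvx : (u ^ a' * u' ^ (-a)) x = x := by
    rw [Homeomorph.mul_apply, zpow_apply_eq_self hu'x, zpow_apply_eq_self hux]
  have hv0 : logSlope (u ^ a' * u' ^ (-a)) x = 0 := by
    rw [logSlope_mul (thompsonV.zpow_mem hu _) (thompsonV.zpow_mem hu' _),
      zpow_apply_eq_self hu'x, logSlope_zpow_of_apply_eq hu hux,
      logSlope_zpow_of_apply_eq hu' hu'x]
    ring
  have h := logSlope_conjH_eq_zero ψ hv hvx hv0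
  rw [conjH_eq_conj, map_mul, map_zpow, map_zpow, ← conjH_eq_conj,
    logSlope_mul (thompsonV.zpow_mem (hψ u hu) _) (thompsonV.zpow_mem (hψ u' hu') _),
    zpow_apply_eq_self (conjH_apply_apply_of_apply_eq hu'x),
    logSlope_zpow_of_apply_eq (hψ u hu) (conjH_apply_apply_of_apply_eq hux),
    logSlope_zpow_of_apply_eq (hψ u' hu') (conjH_apply_apply_of_apply_eq hu'x)] at h
  linear_combination h

end Conjugation

section Periodicity

lemma iterate_shift_one (k : ℕ) (x : Cantor) : (shift 1)^[k] x = shift k x := by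
  induction k with
  | zero => rfl
  | succ k ih => rw [iterate_succ_apply', ih, shift_shift, Nat.add_comm]

lemma isPeriodicPt_shift_iff {n : ℕ} {x : Cantor} : IsPeriodicPt (shift 1) n x ↔ shift n x = x := by
  rw [IsPeriodicPt, IsFixedPt, iterate_shift_one]

lemma isPeriodicPt_shift_of_shift_eq {a b : ℕ} {x : Cantor} (hab : a ≤ b)
    (h : shift a x = shift b x) : IsPeriodicPt (shift 1) (b - a) (shift a x) := by
  rw [isPeriodicPt_shift_iff, shift_shift, Nat.sub_add_cancel hab, h]

lemma shift_length_tailSeq (c : List Bool) : shift c.length (tailSeq c) = tailSeq c := by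
  funext n; simp [shift, tailSeq]

lemma cat_tailSeq (c : List Bool) : cat c (tailSeq c) = tailSeq c := by
  funext i
  rcases lt_or_ge i c.length with h | h
  · rw [cat_apply_of_lt h, tailSeq, Nat.mod_eq_of_lt h]
  · rw [cat_apply_of_le h, tailSeq, tailSeq, Nat.mod_eq_sub_mod h]

lemma cat_flatten_replicate (d : List Bool) (k : ℕ) (z : Cantor) :
    cat (List.replicate k d).flatten z = (cat d)^[k] z := by
  induction k with
  | zero => exact cat_nil z
  | succ k ih => rw [List.replicate_succ, List.flatten_cons, cat_append, ih, iterate_succ_apply']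

/-- A shorter period `g ∣ |c|` of `c∞` would write `c` as a proper power of its first `g`
letters. -/
lemma minimalPeriod_tailSeq {c : List Bool} (hc : PrimeWord c) :
    minimalPeriod (shift 1) (tailSeq c) = c.length := by
  set s := tailSeq c
  have hper : IsPeriodicPt (shift 1) c.length s := isPeriodicPt_shift_iff.2 (shift_length_tailSeq c)
  obtain ⟨k, hk⟩ := hper.minimalPeriod_dvd
  set g := minimalPeriod (shift 1) s
  by_contra hne
  have hk2 : 2 ≤ k := by
    rcases k with _ | _ | k
    · exact (hc.1 (List.eq_nil_of_length_eq_zero (by simpa using hk))).elim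
    · exact (hne (by simpa using hk.symm)).elim
    · omega
  have hd : cat (initSeg s g) s = s := by
    have h := cat_initSeg_shift s g
    rwa [isPeriodicPt_shift_iff.1 (isPeriodicPt_minimalPeriod _ _)] at h
  refine hc.2 (initSeg s g) k hk2 (eq_of_cat_eq_cat (x := s) (y := s) ?_ ?_)
  · simp [initSeg_length, hk, Nat.mul_comm]
  · rw [cat_flatten_replicate, iterate_fixed hd, cat_tailSeq]

lemma dvd_sub_of_shift_eq_of_inTailClass {c : List Bool} (hc : PrimeWord c) {x : Cantor}
    (hx : InTailClass x c) {a b : ℕ} (hab : a ≤ b) (h : shift a x = shift b x) :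
    c.length ∣ b - a := by
  obtain ⟨y, rfl⟩ := hx
  have hs : tailSeq c ∈ periodicPts (shift 1) :=
    mk_mem_periodicPts (List.length_pos_iff.2 hc.1)
      (isPeriodicPt_shift_iff.2 (shift_length_tailSeq c))
  have hp := (isPeriodicPt_shift_of_shift_eq hab h).apply_iterate y.length
  rw [iterate_shift_one, shift_shift, Nat.add_comm, ← shift_shift, shift_cat,
    ← iterate_shift_one] at hp
  simpa [minimalPeriod_apply_iterate hs, minimalPeriod_tailSeq hc] using hp.minimalPeriod_dvd

/-- At a fixed point `x = y·c∞`, a chart `m·z ↦ w·z` makes `x` eventually periodic with period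
`||m| - |w||`, which the minimal period `|c|` must divide. -/
theorem dvd_logSlope_of_inTailClass {c : List Bool} (hc : PrimeWord c) {x : Cantor}
    (hx : InTailClass x c) {w : Cantor ≃ₜ Cantor} (hw : memV w) (hfix : w x = x) :
    (c.length : ℤ) ∣ logSlope w x := by
  obtain ⟨m, m', y, hxm, hm, hk⟩ := hasLogSlope_logSlope hw x
  have hshift : shift m.length x = shift m'.length x := by
    conv_rhs => rw [← hfix, hxm, hm]
    rw [hxm, shift_cat, shift_cat]
  rw [hk]
  rcases le_total m.length m'.length with hl | hl
  · rw [← neg_sub, dvd_neg, ← Nat.cast_sub hl]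
    exact Int.natCast_dvd_natCast.2 (dvd_sub_of_shift_eq_of_inTailClass hc hx hl hshift)
  · rw [← Nat.cast_sub hl]
    exact Int.natCast_dvd_natCast.2 (dvd_sub_of_shift_eq_of_inTailClass hc hx hl hshift.symm)

end Periodicity

section Swap

variable {a b : List Bool}

lemma disjoint_cyl_of_length_eq (hl : a.length = b.length) (hne : a ≠ b) :
    Disjoint (cyl a) (cyl b) :=
  Set.disjoint_left.2 fun _ ⟨_, hx⟩ ⟨_, hx'⟩ => hne (eq_of_cat_eq_cat hl (hx.symm.trans hx'))

lemma disjoint_cyl_cons {b b' : Bool} (h : b ≠ b') (u u' : List Bool) :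
    Disjoint (cyl (b :: u)) (cyl (b' :: u')) :=
  Set.disjoint_left.2 fun _ ⟨_, hx⟩ ⟨_, hx'⟩ =>
    h (by simpa [cat_apply_of_lt] using (congrFun hx 0).symm.trans (congrFun hx' 0))

open Classical in
noncomputable def swapCylFun (a b : List Bool) (x : Cantor) : Cantor :=
  if x ∈ cyl a then cat b (shift a.length x) else if x ∈ cyl b then cat a (shift b.length x) else x

lemma swapCylFun_cat_left (a b : List Bool) (z : Cantor) : swapCylFun a b (cat a z) = cat b z := by
  rw [swapCylFun, if_pos ⟨z, rfl⟩, shift_cat]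

lemma swapCylFun_cat_right (h : Disjoint (cyl a) (cyl b)) (z : Cantor) :
    swapCylFun a b (cat b z) = cat a z := by
  rw [swapCylFun, if_neg (Set.disjoint_right.1 h ⟨z, rfl⟩), if_pos ⟨z, rfl⟩, shift_cat]

lemma swapCylFun_of_notMem {x : Cantor} (ha : x ∉ cyl a) (hb : x ∉ cyl b) :
    swapCylFun a b x = x := by
  rw [swapCylFun, if_neg ha, if_neg hb]

lemma swapCylFun_involutive (h : Disjoint (cyl a) (cyl b)) : Involutive (swapCylFun a b) := by
  intro x
  by_cases ha : x ∈ cyl a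
  · obtain ⟨z, rfl⟩ := ha
    rw [swapCylFun_cat_left, swapCylFun_cat_right h]
  by_cases hb : x ∈ cyl b
  · obtain ⟨z, rfl⟩ := hb
    rw [swapCylFun_cat_right h, swapCylFun_cat_left]
  rw [swapCylFun_of_notMem ha hb, swapCylFun_of_notMem ha hb]

lemma notMem_cyl_of_mem_cylinder {x t : Cantor} {N : ℕ} (hx : x ∉ cyl a) (hN : a.length ≤ N)
    (ht : t ∈ PiNat.cylinder x N) : t ∉ cyl a := fun hta =>
  hx (mem_cyl_iff.2 fun i hi => (ht i (by omega)).symm.trans (mem_cyl_iff.1 hta i hi))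

lemma swapCylFun_locally_cat (h : Disjoint (cyl a) (cyl b)) (x : Cantor) :
    ∃ (m w : List Bool) (y : Cantor), x = cat m y ∧ ∀ z, swapCylFun a b (cat m z) = cat w z := by
  by_cases ha : x ∈ cyl a
  · obtain ⟨y, rfl⟩ := ha
    exact ⟨a, b, y, rfl, swapCylFun_cat_left a b⟩
  by_cases hb : x ∈ cyl b
  · obtain ⟨y, rfl⟩ := hb
    exact ⟨b, a, y, rfl, swapCylFun_cat_right h⟩
  set N := a.length + b.length
  refine ⟨initSeg x N, initSeg x N, shift N x, (cat_initSeg_shift x N).symm, fun z => ?_⟩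
  have hz : cat (initSeg x N) z ∈ PiNat.cylinder x N := cyl_initSeg x N ▸ ⟨z, rfl⟩
  exact swapCylFun_of_notMem (notMem_cyl_of_mem_cylinder ha (by omega) hz)
    (notMem_cyl_of_mem_cylinder hb (by omega) hz)

noncomputable def swapCyl (a b : List Bool) (h : Disjoint (cyl a) (cyl b)) : Cantor ≃ₜ Cantor where
  toEquiv := (swapCylFun_involutive h).toPerm
  continuous_toFun := continuous_of_forall_exists_cat (swapCylFun_locally_cat h)
  continuous_invFun := continuous_of_forall_exists_cat (swapCylFun_locally_cat h)

lemma memV_swapCyl (h : Disjoint (cyl a) (cyl b)) : memV (swapCyl a b h) :=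
  swapCylFun_locally_cat h

lemma swapCyl_cat_left (h : Disjoint (cyl a) (cyl b)) (z : Cantor) :
    swapCyl a b h (cat a z) = cat b z :=
  swapCylFun_cat_left a b z

end Swap

section Orbit

lemma zeroSeq_inQ2 : InQ2 zeroSeq := ⟨0, fun _ _ => rfl⟩

lemma memV_apply_zeroSeq_inQ2 {v : Cantor ≃ₜ Cantor} (hv : memV v) : InQ2 (v zeroSeq) := by
  obtain ⟨m, w, y, h0, hm⟩ := hv zeroSeq
  obtain rfl : y = zeroSeq := by rw [← shift_cat m y, ← h0]; rfl
  exact ⟨w.length, fun n hn => by rw [h0, hm, cat_apply_of_le hn]; rfl⟩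

lemma exists_memV_apply_zeroSeq {x : Cantor} (hx : InQ2 x) : ∃ v, memV v ∧ v zeroSeq = x := by
  obtain ⟨n, hn⟩ := hx
  have hx : x = cat (initSeg x n) zeroSeq := by
    conv_lhs => rw [← cat_initSeg_shift x n]
    congr 1
    funext i
    exact hn _ (Nat.le_add_left n i)
  have h0 : zeroSeq = cat (List.replicate n false) zeroSeq := by
    funext i
    by_cases hi : i < n <;> simp [cat, hi, zeroSeq]
  by_cases he : List.replicate n false = initSeg x n
  · exact ⟨1, thompsonV.one_mem, by rw [Homeomorph.one_apply, hx, ← he, ← h0]⟩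
  have hd := disjoint_cyl_of_length_eq (by simp [initSeg_length]) he
  refine ⟨swapCyl _ _ hd, memV_swapCyl hd, ?_⟩
  rw [h0, swapCyl_cat_left, ← hx]

lemma inTailClass_zeroSeq : InTailClass zeroSeq [false] :=
  ⟨[], by funext n; simp [cat_nil, tailSeq, zeroSeq]⟩

end Orbit

section Contraction

/-- Unlike the slope, this is invariant under topological conjugacy, yet at a fixed point of an
element of `V` it still detects the sign of the slope. -/
def IsContractingAt {X : Type*} [TopologicalSpace X] (f : X → X) (x : X) : Prop :=
  ∃ U ∈ 𝓝 x, ∀ y, (∀ n, y ∈ f^[n] '' U) → y = x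

lemma IsContractingAt.conj {X Y : Type*} [TopologicalSpace X] [TopologicalSpace Y] {f : X → X}
    {x : X} (h : IsContractingAt f x) (e : X ≃ₜ Y) : IsContractingAt (e ∘ f ∘ e.symm) (e x) := by
  obtain ⟨U, hU, hUx⟩ := h
  have hconj : Semiconj e f (e ∘ f ∘ e.symm) := fun x => by simp
  refine ⟨e '' U, e.isOpenMap.image_mem_nhds hU, fun y hy => ?_⟩
  rw [← e.apply_symm_apply y, hUx (e.symm y) fun n => ?_]
  obtain ⟨_, ⟨z, hz, rfl⟩, hzy⟩ := hy n
  exact ⟨z, hz, by rw [← hzy, ← (hconj.iterate_right n).eq, e.symm_apply_apply]⟩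

lemma iterate_cat_apply_eq {c : List Bool} (hc : c ≠ []) {i n : ℕ} (h : i < n) (z z' : Cantor) :
    (cat c)^[n] z i = (cat c)^[n] z' i := by
  induction n generalizing i with
  | zero => omega
  | succ n ih =>
    rw [iterate_succ_apply', iterate_succ_apply']
    rcases lt_or_ge i c.length with hi | hi
    · rw [cat_apply_of_lt hi, cat_apply_of_lt hi]
    · have := List.length_pos_iff.2 hc
      rw [cat_apply_of_le hi, cat_apply_of_le hi, ih (by omega)]

lemma isContractingAt_of_cat_eq {r : Cantor → Cantor} {y c : List Bool} (hc : c ≠ [])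
    (hr : ∀ z, r (cat y z) = cat (y ++ c) z) : IsContractingAt r (cat y (tailSeq c)) := by
  have hiter : ∀ n z, r^[n] (cat y z) = cat y ((cat c)^[n] z) := fun n => by
    induction n with
    | zero => exact fun _ => rfl
    | succ n ih => intro z; rw [iterate_succ_apply', ih, hr, cat_append, iterate_succ_apply']
  refine ⟨cyl y, (isOpen_cyl y).mem_nhds ⟨_, rfl⟩, fun t ht => funext fun i => ?_⟩
  obtain ⟨_, ⟨z, -, rfl⟩, rfl⟩ := ht (i + 1)
  rw [hiter, ← iterate_fixed (cat_tailSeq c) (i + 1)]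
  rcases lt_or_ge i y.length with hi | hi
  · rw [cat_apply_of_lt hi, cat_apply_of_lt hi]
  · rw [cat_apply_of_le hi, cat_apply_of_le hi, iterate_cat_apply_eq hc (by omega)]

lemma exists_memV_cat_eq_cat_append {y : List Bool} (hy : y ≠ []) (c : List Bool) :
    ∃ r, memV r ∧ ∀ z, r (cat y z) = cat (y ++ c) z := by
  obtain ⟨b, u, rfl⟩ := List.exists_cons_of_ne_nil hy
  have hb : b ≠ !b := by cases b <;> decide
  have h₁ := disjoint_cyl_cons hb u []
  have h₂ := disjoint_cyl_cons hb.symm [] (u ++ c)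
  refine ⟨swapCyl _ _ h₂ * swapCyl _ _ h₁,
    thompsonV.mul_mem (memV_swapCyl h₂) (memV_swapCyl h₁), fun z => ?_⟩
  rw [Homeomorph.mul_apply, swapCyl_cat_left, swapCyl_cat_left, List.cons_append]

theorem exists_memV_isContractingAt {c : List Bool} (hc : c ≠ []) {p : Cantor}
    (hp : InTailClass p c) :
    ∃ r, memV r ∧ r p = p ∧ logSlope r p = -c.length ∧ IsContractingAt r p := by
  obtain ⟨y, rfl⟩ := hp
  obtain ⟨r, hr, hrcat⟩ := exists_memV_cat_eq_cat_append (y := y ++ c) (by simp [hc]) c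
  have hp : cat y (tailSeq c) = cat (y ++ c) (tailSeq c) := by rw [cat_append, cat_tailSeq]
  refine ⟨r, hr, ?_, ?_, hp ▸ isContractingAt_of_cat_eq hc hrcat⟩
  · rw [hp, hrcat, cat_append (y ++ c), cat_tailSeq]
  · exact HasLogSlope.logSlope_eq ⟨y ++ c, y ++ c ++ c, tailSeq c, hp, hrcat, by simp⟩

/-- A nonnegative slope at a fixed point gives a cylinder `C` around it with `C ⊆ w '' C`. -/
theorem not_isContractingAt_of_logSlope_nonneg {w : Cantor ≃ₜ Cantor} {x : Cantor}
    (hw : memV w) (hx : w x = x) (h : 0 ≤ logSlope w x) : ¬ IsContractingAt w x := by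
  rintro ⟨U, hU, hUx⟩
  obtain ⟨m, m', y, hxm, hm, hk⟩ := hasLogSlope_logSlope hw x
  have hxm' : x = cat m' y := by rw [← hm, ← hxm, hx]
  obtain ⟨N, hN⟩ := exists_cylinder_subset hU
  set K := N + m.length
  have hC : PiNat.cylinder x K ⊆ w '' PiNat.cylinder x K := by
    intro t ht
    have htm' : t ∈ cyl m' :=
      mem_cyl_iff.2 fun i hi => by rw [ht i (by omega), hxm', cat_apply_of_lt hi]
    refine ⟨cat m (shift m'.length t), fun i hi => ?_, by rw [hm, cat_shift_of_mem_cyl htm']⟩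
    rcases lt_or_ge i m.length with hi' | hi'
    · rw [cat_apply_of_lt hi', hxm, cat_apply_of_lt hi']
    · rw [cat_apply_of_le hi', shift, ht _ (by omega)]
      conv_lhs => rw [hxm', cat_apply_of_le (by omega)]
      conv_rhs => rw [hxm, cat_apply_of_le hi']
      congr 1
      omega
  have hCn : ∀ n, PiNat.cylinder x K ⊆ w^[n] '' PiNat.cylinder x K := fun n => by
    induction n with
    | zero => simp
    | succ n ih => rw [iterate_succ, Set.image_comp]; exact ih.trans (Set.image_mono hC)
  have hupd := PiNat.update_mem_cylinder x K (!x K)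
  have := hUx _ fun n => Set.image_mono ((PiNat.cylinder_anti x (by omega)).trans hN) (hCn n hupd)
  simpa using congrFun this K

end Contraction

theorem logSlope_conjH_symm_eq {φ : Cantor ≃ₜ Cantor} (hφ : NormalizesV φ) {c : List Bool}
    (hc : PrimeWord c) (hclass : ∀ y : Cantor, InQ2 (φ y) ↔ InTailClass y c)
    {u : Cantor ≃ₜ Cantor} (hu : memV u) (hu0 : u zeroSeq = zeroSeq) :
    logSlope (conjH φ.symm u) (φ.symm zeroSeq) = c.length * logSlope u zeroSeq := by
  have hp : InTailClass (φ.symm zeroSeq) c := (hclass _).1 (by simpa using zeroSeq_inQ2)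
  obtain ⟨r, hr, hrp, hrs, hrc⟩ := exists_memV_isContractingAt hc.1 hp
  obtain ⟨u₁, hu₁, hu₁0, hu₁s, -⟩ := exists_memV_isContractingAt (by simp) inTailClass_zeroSeq
  have hur : memV (conjH φ r) := hφ.memV_conjH hr
  have hur0 : conjH φ r zeroSeq = zeroSeq := by simp [conjH_apply, hrp]
  have hprop : ∀ u, memV u → u zeroSeq = zeroSeq → logSlope (conjH φ.symm u) (φ.symm zeroSeq) *
      logSlope (conjH φ r) zeroSeq = -c.length * logSlope u zeroSeq := fun u hu hu0 => by
    have h := logSlope_conjH_mul_logSlope_comm (fun _ => hφ.memV_conjH_symm) hu hur hu0 hur0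
    rwa [conjH_symm_conjH, hrs] at h
  have hurc : IsContractingAt (conjH φ r) zeroSeq := by
    have h := hrc.conj φ
    rw [φ.apply_symm_apply] at h
    exact h
  have hneg : logSlope (conjH φ r) zeroSeq < 0 :=
    lt_of_not_ge fun h => not_isContractingAt_of_logSlope_nonneg hur hur0 h hurc
  obtain ⟨t, ht⟩ := dvd_logSlope_of_inTailClass hc hp (hφ.memV_conjH_symm hu₁)
    (by simpa using conjH_apply_apply_of_apply_eq (ψ := φ.symm) hu₁0)
  have hunit : t * logSlope (conjH φ r) zeroSeq = 1 := by
    have h := hprop u₁ hu₁ hu₁0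
    rw [ht, hu₁s, List.length_singleton, Nat.cast_one] at h
    have hc0 : (c.length : ℤ) ≠ 0 := by simpa using hc.1
    exact mul_left_cancel₀ hc0 (by linear_combination h)
  have hm1 : logSlope (conjH φ r) zeroSeq = -1 :=
    (Int.eq_one_or_neg_one_of_mul_eq_one' hunit).elim (fun h => by omega) fun h => h.2
  linear_combination -(hprop u hu hu0) + logSlope (conjH φ.symm u) (φ.symm zeroSeq) * hm1

section Defect

variable {φ v w : Cantor ≃ₜ Cantor} {k : ℤ}

noncomputable def slopeDefect (φ : Cantor ≃ₜ Cantor) (k : ℤ) (v : Cantor ≃ₜ Cantor) (x : Cantor) :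
    ℤ :=
  logSlope (conjH φ.symm v) (φ.symm x) - k * logSlope v x

lemma slopeDefect_mul (hφ : NormalizesV φ) (hv : memV v) (hw : memV w) (x : Cantor) :
    slopeDefect φ k (v * w) x = slopeDefect φ k v (w x) + slopeDefect φ k w x := by
  have hconj : conjH φ.symm (v * w) = conjH φ.symm v * conjH φ.symm w := by
    rw [conjH_eq_conj, map_mul]
  simp only [slopeDefect, hconj, logSlope_mul (hφ.memV_conjH_symm hv) (hφ.memV_conjH_symm hw),
    logSlope_mul hv hw, conjH_apply, Homeomorph.symm_symm, Homeomorph.apply_symm_apply]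
  ring

lemma slopeDefect_eq_of_apply_eq (hφ : NormalizesV φ)
    (h0 : ∀ u, memV u → u zeroSeq = zeroSeq → slopeDefect φ k u zeroSeq = 0)
    (hv : memV v) (hw : memV w) (hvw : v zeroSeq = w zeroSeq) :
    slopeDefect φ k v zeroSeq = slopeDefect φ k w zeroSeq := by
  have hu : memV (w⁻¹ * v) := thompsonV.mul_mem (thompsonV.inv_mem hw) hv
  have hu0 : (w⁻¹ * v) zeroSeq = zeroSeq := by simp [hvw]
  rw [← mul_inv_cancel_left w v, slopeDefect_mul hφ hw hu, hu0, h0 _ hu hu0, add_zero]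

open Classical in
noncomputable def slopeGamma (φ : Cantor ≃ₜ Cantor) (k : ℤ) (x : Cantor) : ℤ :=
  if h : ∃ v, memV v ∧ v zeroSeq = x then slopeDefect φ k h.choose zeroSeq else 0

lemma slopeGamma_of_not_inQ2 {x : Cantor} (hx : ¬ InQ2 x) : slopeGamma φ k x = 0 :=
  dif_neg fun ⟨_, hv, hvx⟩ => hx (hvx ▸ memV_apply_zeroSeq_inQ2 hv)

lemma slopeGamma_apply_zeroSeq (hφ : NormalizesV φ)
    (h0 : ∀ u, memV u → u zeroSeq = zeroSeq → slopeDefect φ k u zeroSeq = 0) (hv : memV v) :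
    slopeGamma φ k (v zeroSeq) = slopeDefect φ k v zeroSeq := by
  have h : ∃ w, memV w ∧ w zeroSeq = v zeroSeq := ⟨v, hv, rfl⟩
  rw [slopeGamma, dif_pos h]
  exact slopeDefect_eq_of_apply_eq hφ h0 h.choose_spec.1 hv h.choose_spec.2

end Defect

/-- Given `φ` normalizing `V` (with `k_φ = |c|` for a prime word `c`
whose tail class is `φ⁻¹(Q₂)`), there is a unique map `γ_φ : Q₂ → ℤ` with
`γ_φ(v·0) = log₂((φ⁻¹vφ)'(φ⁻¹0)) − k_φ·log₂(v'(0))` for all `v ∈ V`; moreover it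
satisfies `γ_φ(vx) − γ_φ(x) = log₂((φ⁻¹vφ)'(φ⁻¹x)) − k_φ·log₂(v'(x))` for all
`v ∈ V`, `x ∈ Q₂`. -/
theorem gamma_exists_unique (φ : Cantor ≃ₜ Cantor) (hφ : NormalizesV φ)
    (c : List Bool) (hc : PrimeWord c)
    (hclass : ∀ y : Cantor, InQ2 (φ y) ↔ InTailClass y c) :
    (∃! γ : Cantor → ℤ,
      (∀ x, ¬ InQ2 x → γ x = 0) ∧
      (∀ v : Cantor ≃ₜ Cantor, memV v →
        γ (v zeroSeq) =
          logSlope (conjH φ.symm v) (φ.symm zeroSeq) - (c.length : ℤ) * logSlope v zeroSeq)) ∧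
    (∀ γ : Cantor → ℤ,
      ((∀ x, ¬ InQ2 x → γ x = 0) ∧
       (∀ v : Cantor ≃ₜ Cantor, memV v →
        γ (v zeroSeq) =
          logSlope (conjH φ.symm v) (φ.symm zeroSeq) - (c.length : ℤ) * logSlope v zeroSeq)) →
      ∀ (v : Cantor ≃ₜ Cantor), memV v → ∀ x, InQ2 x →
        γ (v x) - γ x =
          logSlope (conjH φ.symm v) (φ.symm x) - (c.length : ℤ) * logSlope v x) := by
  have h0 : ∀ u, memV u → u zeroSeq = zeroSeq → slopeDefect φ c.length u zeroSeq = 0 :=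
    fun u hu hu0 => sub_eq_zero.2 (logSlope_conjH_symm_eq hφ hc hclass hu hu0)
  refine ⟨⟨slopeGamma φ c.length, ⟨fun _ => slopeGamma_of_not_inQ2,
    fun _ => slopeGamma_apply_zeroSeq hφ h0⟩, fun γ ⟨hγQ, hγV⟩ => funext fun x => ?_⟩,
    fun γ ⟨_, hγV⟩ v hv x hx => ?_⟩
  · by_cases hx : InQ2 x
    · obtain ⟨w, hw, rfl⟩ := exists_memV_apply_zeroSeq hx
      exact (hγV w hw).trans (slopeGamma_apply_zeroSeq hφ h0 hw).symm
    · rw [hγQ x hx, slopeGamma_of_not_inQ2 hx]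
  · obtain ⟨w, hw, rfl⟩ := exists_memV_apply_zeroSeq hx
    rw [← Homeomorph.mul_apply, hγV _ (thompsonV.mul_mem hv hw), hγV w hw]
    exact sub_eq_of_eq_add (slopeDefect_mul hφ hv hw zeroSeq)
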